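/- Estimate (12) (from the proof of Theorem 1): Let 1 < p ≤ 2 and let f ∈ L^p_A(ℝ₊) on the Jacobi hypergroup, and let g(t) = t^{2(α+1)} for t > k and g(t) = t³ for 0 ≤ t ≤ k, where k is the constant from the c-function estimates. Then there exists a positive constant c such that for every δ > 0, δ^{2p} ∫₀^{1/δ} t^{2p} |𝓕(f)(t)|^p (g(t))^{p−2} dt/|c(t)|² ≤ c (ω_{A,p}(f)(δ))^p. -/

import Mathlib

open MeasureTheory Set Filter

/-- The `L^p` norm on `(0,∞)` with respect to the weighted measure `w(x) dx`. -/
noncomputable def wLpNorm (w : ℝ → ℝ) (p : ℝ) (f : ℝ → ℂ) : ℝ :=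
  (∫ x in Set.Ioi (0 : ℝ), ‖f x‖ ^ p * w x) ^ (1 / p)

/-- Membership in `L^p((0,∞), w(x) dx)`. -/
def MemW (w : ℝ → ℝ) (p : ℝ) (f : ℝ → ℂ) : Prop :=
  AEMeasurable f (volume.restrict (Set.Ioi (0 : ℝ))) ∧
    IntegrableOn (fun x => ‖f x‖ ^ p * w x) (Set.Ioi (0 : ℝ))

/-- The Jacobi hypergroup setting: the Chébli–Trimèche hypergroup `(ℝ₊, ∗(A))` with
`A(x) = 2^(2ρ) (sinh x)^(2α+1) (cosh x)^(2β+1)`, `α ≥ β ≥ -1/2`, `α ≠ -1/2`,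
`ρ = α + β + 1`.  Its characters are the Jacobi functions `φ_λ`, satisfying
`|1 - φ_λ(t)| ≥ c₀ min{1, (λt)²}`.  The density `cden = |c(λ)|⁻²` is even, continuous
and comparable to `|λ|^(2α+1)` for `|λ| > k` and to `|λ|²` for `|λ| ≤ k`.  The
generalized Fourier transform `FT` is given on `L¹_A` by
`𝓕(f)(λ) = ∫₀^∞ f(x) φ_λ(x) A(x) dx`; it satisfies `‖𝓕 f‖_∞ ≤ ‖f‖_{A,1}`, the
Hausdorff–Young inequality, the Hardy–Littlewood inequality of Lemma 1 and the
translation identity `𝓕(τ_δ f)(λ) = φ_λ(δ) 𝓕(f)(λ)`, where the generalized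
translations `τ_δ` are `L^p_A`-contractions. -/
structure JacobiHypergroup where
  α : ℝ
  β : ℝ
  ρ : ℝ
  hβα : β ≤ α
  hβ : -(1/2) ≤ β
  hα : α ≠ -(1/2)
  hρ : ρ = α + β + 1
  /-- the weight function `A` of the Jacobi hypergroup -/
  A : ℝ → ℝ
  hA : ∀ x : ℝ, 0 ≤ x →
    A x = (2 : ℝ) ^ (2 * ρ) * Real.sinh x ^ (2 * α + 1) * Real.cosh x ^ (2 * β + 1)
  /-- the Jacobi functions `φ_λ`, the characters of the hypergroup -/
  φ : ℝ → ℝ → ℂ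
  c₀ : ℝ
  hc₀ : 0 < c₀
  hφ_lower : ∀ lam t : ℝ, 0 < t →
    c₀ * min 1 ((lam * t) ^ 2) ≤ ‖1 - φ lam t‖
  /-- the density `|c(λ)|⁻²` of the Plancherel measure -/
  cden : ℝ → ℝ
  hcden_cont : Continuous cden
  hcden_even : ∀ x : ℝ, cden (-x) = cden x
  k : ℝ
  k₁ : ℝ
  k₂ : ℝ
  hk : 0 < k
  hk₁ : 0 < k₁
  hk₂ : 0 < k₂
  hcden_hi : ∀ x : ℝ, k < |x| →
    k₁ * |x| ^ (2 * α + 1) ≤ cden x ∧ cden x ≤ k₂ * |x| ^ (2 * α + 1)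
  hcden_lo : ∀ x : ℝ, |x| ≤ k →
    k₁ * |x| ^ (2 : ℝ) ≤ cden x ∧ cden x ≤ k₂ * |x| ^ (2 : ℝ)
  /-- the generalized Fourier transform -/
  FT : (ℝ → ℂ) → ℝ → ℂ
  hFT_def : ∀ f : ℝ → ℂ, MemW A 1 f → ∀ lam : ℝ,
    FT f lam = ∫ x in Set.Ioi (0 : ℝ), f x * φ lam x * (A x : ℂ)
  hFT_meas : ∀ f : ℝ → ℂ, Measurable (FT f)
  hFT_sub : ∀ f g : ℝ → ℂ, ∀ lam : ℝ,
    FT (fun y => f y - g y) lam = FT f lam - FT g lam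
  /-- `‖𝓕 f‖_∞ ≤ ‖f‖_{A,1}` -/
  hFT_sup : ∀ f : ℝ → ℂ, MemW A 1 f → ∀ lam : ℝ,
    ‖FT f lam‖ ≤ wLpNorm A 1 f
  /-- the Hausdorff–Young inequality `‖𝓕 f‖_{c,p'} ≤ C ‖f‖_{A,p}` -/
  hHY : ∀ p p' : ℝ, 1 < p → p ≤ 2 → 1 / p + 1 / p' = 1 →
    ∃ C > (0 : ℝ), ∀ f : ℝ → ℂ, MemW A p f →
      (∫⁻ lam in Set.Ioi (0 : ℝ),
          ENNReal.ofReal (‖FT f lam‖ ^ p' * cden lam)) ^ (1 / p')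
        ≤ ENNReal.ofReal (C * wLpNorm A p f)
  /-- the Hardy–Littlewood inequality of Lemma 1 (with the piecewise weight
  `g(t) = t³` for `t ≤ k`, `g(t) = t^(2(α+1))` for `t > k`) -/
  hHL : ∀ p : ℝ, 1 < p → p ≤ 2 →
    ∃ C > (0 : ℝ), ∀ f : ℝ → ℂ, MemW A p f →
      ∫⁻ x in Set.Ioi (0 : ℝ),
          ENNReal.ofReal ((if x ≤ k then x ^ (3 : ℝ) else x ^ (2 * (α + 1))) ^ (p - 2) *
            ‖FT f x‖ ^ p * cden x)
        ≤ ENNReal.ofReal (C * wLpNorm A p f ^ p)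
  /-- the generalized translation operators -/
  τ : ℝ → (ℝ → ℂ) → ℝ → ℂ
  hτ_contract : ∀ p : ℝ, 1 ≤ p → ∀ (δ : ℝ) (f : ℝ → ℂ), MemW A p f →
    MemW A p (τ δ f) ∧ wLpNorm A p (τ δ f) ≤ wLpNorm A p f
  hτ_diff : ∀ p : ℝ, 1 ≤ p → ∀ (δ : ℝ) (f : ℝ → ℂ), MemW A p f →
    MemW A p (fun y => τ δ f y - f y)
  /-- the translation identity `𝓕(τ_δ f)(λ) = φ_λ(δ) 𝓕(f)(λ)` -/
  hτ_FT : ∀ p : ℝ, 1 ≤ p → p ≤ 2 → ∀ (δ : ℝ) (f : ℝ → ℂ), MemW A p f →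
    ∀ᵐ lam ∂(volume.restrict (Set.Ioi (0 : ℝ))),
      FT (τ δ f) lam = φ lam δ * FT f lam

/-- The modulus of continuity of first order, `ω_{A,p}(f)(δ) = ‖τ_δ f - f‖_{A,p}`. -/
noncomputable def JacobiHypergroup.omega (S : JacobiHypergroup) (p : ℝ)
    (f : ℝ → ℂ) (δ : ℝ) : ℝ :=
  wLpNorm S.A p (fun y => S.τ δ f y - f y)

/-! Since `𝓕(τ_δ f - f)(λ) = (φ_λ(δ) - 1) 𝓕(f)(λ)` and `|1 - φ_λ(δ)| ≥ c₀ (λδ)²` for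
`λ < 1/δ`, the left-hand side is at most `c₀^(-p)` times the Hardy–Littlewood integral of
`τ_δ f - f`, which Lemma 1 bounds by a constant times `‖τ_δ f - f‖_{A,p}^p`. -/

namespace JacobiHypergroup

variable (S : JacobiHypergroup)

/-- The weight `g` of the Hardy–Littlewood inequality (Lemma 1). -/
noncomputable def hlWeight (t : ℝ) : ℝ :=
  if t ≤ S.k then t ^ (3 : ℝ) else t ^ (2 * (S.α + 1))

lemma hlWeight_pos {t : ℝ} (ht : 0 < t) : 0 < S.hlWeight t := by
  unfold hlWeight
  split <;> exact Real.rpow_pos_of_pos ht _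

lemma cden_nonneg (t : ℝ) : 0 ≤ S.cden t := by
  rcases le_or_gt |t| S.k with ht | ht
  · exact (mul_nonneg S.hk₁.le (by positivity)).trans (S.hcden_lo t ht).1
  · exact (mul_nonneg S.hk₁.le (by positivity)).trans (S.hcden_hi t ht).1

lemma norm_one_sub_φ_ge {lam δ : ℝ} (hδ : 0 < δ) (h : |lam * δ| ≤ 1) :
    S.c₀ * (lam * δ) ^ 2 ≤ ‖1 - S.φ lam δ‖ := by
  have hsq : (lam * δ) ^ 2 ≤ 1 := by
    simpa only [sq_abs, one_pow] using pow_le_pow_left₀ (abs_nonneg _) h 2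
  simpa only [min_eq_right hsq] using S.hφ_lower lam δ hδ

lemma FT_translate_sub_ae {p : ℝ} (hp : 1 ≤ p) (hp2 : p ≤ 2) {f : ℝ → ℂ}
    (hf : MemW S.A p f) (δ : ℝ) :
    ∀ᵐ lam ∂volume.restrict (Ioi 0),
      S.FT (fun y => S.τ δ f y - f y) lam = (S.φ lam δ - 1) * S.FT f lam := by
  filter_upwards [S.hτ_FT p hp hp2 δ f hf] with lam hlam
  rw [S.hFT_sub, hlam]
  ring

lemma rpow_mul_norm_le_norm_sub_mul_rpow {p lam δ : ℝ} (hp : 0 ≤ p) (hδ : 0 < δ)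
    (hlam : 0 ≤ lam) (hlamδ : lam * δ ≤ 1) (z : ℂ) :
    δ ^ (2 * p) * (lam ^ (2 * p) * ‖z‖ ^ p)
      ≤ (S.c₀ ^ p)⁻¹ * ‖(S.φ lam δ - 1) * z‖ ^ p := by
  have hlamδ0 : 0 ≤ lam * δ := mul_nonneg hlam hδ.le
  have hbound : S.c₀ * (lam * δ) ^ 2 * ‖z‖ ≤ ‖(S.φ lam δ - 1) * z‖ := by
    rw [norm_mul, norm_sub_rev]
    exact mul_le_mul_of_nonneg_right
      (S.norm_one_sub_φ_ge hδ (abs_le.2 ⟨by linarith, hlamδ⟩)) (norm_nonneg z)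
  have hsq_rpow : ((lam * δ) ^ 2) ^ p = δ ^ (2 * p) * lam ^ (2 * p) := by
    rw [← Real.rpow_natCast, ← Real.rpow_mul hlamδ0, Real.mul_rpow hlam hδ.le]
    push_cast
    ring
  have hc₀δ : 0 ≤ S.c₀ * (lam * δ) ^ 2 := mul_nonneg S.hc₀.le (sq_nonneg _)
  have hc₀p : 0 < S.c₀ ^ p := Real.rpow_pos_of_pos S.hc₀ p
  rw [le_inv_mul_iff₀ hc₀p]
  calc S.c₀ ^ p * (δ ^ (2 * p) * (lam ^ (2 * p) * ‖z‖ ^ p))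
      = (S.c₀ * (lam * δ) ^ 2 * ‖z‖) ^ p := by
        rw [Real.mul_rpow hc₀δ (norm_nonneg z),
          Real.mul_rpow S.hc₀.le (by positivity), hsq_rpow]
        ring
    _ ≤ ‖(S.φ lam δ - 1) * z‖ ^ p :=
        Real.rpow_le_rpow (mul_nonneg hc₀δ (norm_nonneg z)) hbound hp

lemma integrand_le_ae {p : ℝ} (hp : 1 ≤ p) (hp2 : p ≤ 2) {f : ℝ → ℂ} (hf : MemW S.A p f)
    {δ : ℝ} (hδ : 0 < δ) :
    ∀ᵐ t ∂volume.restrict (Ioo 0 (1 / δ)),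
      ENNReal.ofReal (δ ^ (2 * p)) *
          ENNReal.ofReal (t ^ (2 * p) * ‖S.FT f t‖ ^ p * S.hlWeight t ^ (p - 2) * S.cden t)
        ≤ ENNReal.ofReal (S.c₀ ^ p)⁻¹ * ENNReal.ofReal
            (S.hlWeight t ^ (p - 2) * ‖S.FT (fun y => S.τ δ f y - f y) t‖ ^ p * S.cden t) := by
  filter_upwards [ae_restrict_of_ae_restrict_of_subset Ioo_subset_Ioi_self
      (S.FT_translate_sub_ae hp hp2 hf δ), ae_restrict_mem measurableSet_Ioo]
    with t hFT ⟨ht0, ht1⟩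
  have hw : 0 ≤ S.hlWeight t ^ (p - 2) * S.cden t :=
    mul_nonneg (Real.rpow_nonneg (S.hlWeight_pos ht0).le _) (S.cden_nonneg t)
  have hc₀p : 0 ≤ (S.c₀ ^ p)⁻¹ := inv_nonneg.2 (Real.rpow_nonneg S.hc₀.le p)
  rw [← ENNReal.ofReal_mul (by positivity), ← ENNReal.ofReal_mul hc₀p, hFT]
  refine ENNReal.ofReal_le_ofReal ?_
  calc δ ^ (2 * p) * (t ^ (2 * p) * ‖S.FT f t‖ ^ p * S.hlWeight t ^ (p - 2) * S.cden t)
      = δ ^ (2 * p) * (t ^ (2 * p) * ‖S.FT f t‖ ^ p) * (S.hlWeight t ^ (p - 2) * S.cden t) := by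
        ring
    _ ≤ (S.c₀ ^ p)⁻¹ * ‖(S.φ t δ - 1) * S.FT f t‖ ^ p * (S.hlWeight t ^ (p - 2) * S.cden t) :=
        mul_le_mul_of_nonneg_right (S.rpow_mul_norm_le_norm_sub_mul_rpow (by linarith) hδ
          ht0.le ((lt_div_iff₀ hδ).1 ht1).le _) hw
    _ = (S.c₀ ^ p)⁻¹ *
          (S.hlWeight t ^ (p - 2) * ‖(S.φ t δ - 1) * S.FT f t‖ ^ p * S.cden t) := by
        ring

lemma lintegral_Ioo_le_lintegral_FT_translate_sub {p : ℝ} (hp : 1 ≤ p) (hp2 : p ≤ 2)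
    {f : ℝ → ℂ} (hf : MemW S.A p f) {δ : ℝ} (hδ : 0 < δ) :
    ENNReal.ofReal (δ ^ (2 * p)) * ∫⁻ t in Ioo 0 (1 / δ),
        ENNReal.ofReal (t ^ (2 * p) * ‖S.FT f t‖ ^ p * S.hlWeight t ^ (p - 2) * S.cden t)
      ≤ ENNReal.ofReal (S.c₀ ^ p)⁻¹ * ∫⁻ t in Ioi 0, ENNReal.ofReal
          (S.hlWeight t ^ (p - 2) * ‖S.FT (fun y => S.τ δ f y - f y) t‖ ^ p * S.cden t) := by
  rw [← lintegral_const_mul' _ _ ENNReal.ofReal_ne_top,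
    ← lintegral_const_mul' _ _ ENNReal.ofReal_ne_top]
  exact (lintegral_mono_ae (S.integrand_le_ae hp hp2 hf hδ)).trans
    (lintegral_mono_set Ioo_subset_Ioi_self)

end JacobiHypergroup

/-- **Estimate (12)** (from the proof of Theorem 1): for `1 < p ≤ 2` and
`f ∈ L^p_A(ℝ₊)` on the Jacobi hypergroup, with `g(t) = t^(2(α+1))` for `t > k` and
`g(t) = t³` for `0 ≤ t ≤ k`, there exists `c > 0` such that for every `δ > 0`,
`δ^(2p) ∫₀^{1/δ} t^(2p) |𝓕(f)(t)|^p (g(t))^(p-2) dt/|c(t)|² ≤ c (ω_{A,p}(f)(δ))^p`. -/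
theorem estimate_twelve (S : JacobiHypergroup) (p : ℝ) (hp : 1 < p) (hp2 : p ≤ 2)
    (f : ℝ → ℂ) (hf : MemW S.A p f) :
    ∃ c > (0 : ℝ), ∀ δ > (0 : ℝ),
      ENNReal.ofReal (δ ^ (2 * p)) *
          ∫⁻ t in Set.Ioo (0 : ℝ) (1 / δ),
            ENNReal.ofReal (t ^ (2 * p) * ‖S.FT f t‖ ^ p *
              (if t ≤ S.k then t ^ (3 : ℝ) else t ^ (2 * (S.α + 1))) ^ (p - 2) *
              S.cden t)
        ≤ ENNReal.ofReal (c * S.omega p f δ ^ p) := by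
  obtain ⟨C, hC, hHL⟩ := S.hHL p hp hp2
  have hc₀p : 0 < (S.c₀ ^ p)⁻¹ := inv_pos.2 (Real.rpow_pos_of_pos S.hc₀ p)
  refine ⟨C * (S.c₀ ^ p)⁻¹, mul_pos hC hc₀p, fun δ hδ => ?_⟩
  calc _ ≤ _ := S.lintegral_Ioo_le_lintegral_FT_translate_sub hp.le hp2 hf hδ
    _ ≤ ENNReal.ofReal (S.c₀ ^ p)⁻¹ * ENNReal.ofReal (C * S.omega p f δ ^ p) := by
        gcongr
        exact hHL _ (S.hτ_diff p hp.le δ f hf)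
    _ = ENNReal.ofReal (C * (S.c₀ ^ p)⁻¹ * S.omega p f δ ^ p) := by
        rw [← ENNReal.ofReal_mul hc₀p.le]
        ring_nf
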